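/- Let N be a classical channel on a finite set, γ ≥ 1, δ ∈ [0,1], and suppose E_γ(N(·|a)‖N(·|b)) ≤ δ for all inputs a, b. Then for any γ' ≥ 1 and any probability distributions p, q, E_{γ'}(Np‖Nq) ≤ max( ((γ + 2δ − 1)·E_{γ'}(p‖q) − (γ'−1)(1−δ))/(γ+1), δ·E_{γ'}(p‖q) ). -/
import Mathlib

open Finset Real

def IsProb {X : Type*} [Fintype X] (p : X → ℝ) : Prop :=
  (∀ x, 0 ≤ p x) ∧ ∑ x, p x = 1

noncomputable def hsDiv {X : Type*} [Fintype X] (γ : ℝ) (p q : X → ℝ) : ℝ :=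
  ∑ x, max 0 (p x - γ * q x)

noncomputable def push {X Y : Type*} [Fintype X] (N : X → Y → ℝ) (p : X → ℝ) : Y → ℝ :=
  fun y => ∑ x, N x y * p x

lemma hsDiv_nonneg {X : Type*} [Fintype X] (γ : ℝ) (p q : X → ℝ) :
    0 ≤ hsDiv γ p q :=
  Finset.sum_nonneg fun x _ => le_max_left _ _

lemma hsDiv_anti {X : Type*} [Fintype X] {γ β : ℝ} (h : γ ≤ β) {p q : X → ℝ}
    (hq : ∀ x, 0 ≤ q x) : hsDiv β p q ≤ hsDiv γ p q := by
  refine Finset.sum_le_sum fun x _ => max_le_max le_rfl ?_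
  nlinarith [hq x]

/-- TV bound from two-sided hockey-stick bounds. -/
lemma tv_bound {Y : Type*} [Fintype Y] {P Q : Y → ℝ} (hP : IsProb P) (hQ : IsProb Q)
    {γ δ : ℝ} (hγ : 1 ≤ γ) (h1 : hsDiv γ P Q ≤ δ) (h2 : hsDiv γ Q P ≤ δ) :
    hsDiv 1 P Q ≤ (γ - 1 + 2 * δ) / (γ + 1) := by
  classical
  set A : Finset Y := Finset.univ.filter (fun x => Q x < P x) with hA
  have hsplitP := Finset.sum_filter_add_sum_filter_not Finset.univ (fun x => Q x < P x) P
  have hsplitQ := Finset.sum_filter_add_sum_filter_not Finset.univ (fun x => Q x < P x) Q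
  rw [hP.2] at hsplitP
  rw [hQ.2] at hsplitQ
  have hTV : hsDiv 1 P Q = ∑ x ∈ A, (P x - Q x) := by
    rw [hsDiv, ← Finset.sum_filter_add_sum_filter_not Finset.univ (fun x => Q x < P x)]
    have e1 : ∑ x ∈ A, max 0 (P x - 1 * Q x) = ∑ x ∈ A, (P x - Q x) := by
      refine Finset.sum_congr rfl fun x hx => ?_
      have : Q x < P x := (Finset.mem_filter.mp hx).2
      rw [one_mul, max_eq_right (by linarith)]
    have e2 : ∑ x ∈ Finset.univ.filter (fun x => ¬ Q x < P x), max 0 (P x - 1 * Q x) = 0 := by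
      refine Finset.sum_eq_zero fun x hx => ?_
      have : ¬ Q x < P x := (Finset.mem_filter.mp hx).2
      rw [one_mul, max_eq_left (by linarith [not_lt.mp this])]
    rw [e1, e2, add_zero]
  have key1 : ∑ x ∈ A, (P x - γ * Q x) ≤ δ := by
    refine le_trans (le_trans (Finset.sum_le_sum fun x _ => le_max_right 0 _) ?_) h1
    exact Finset.sum_le_sum_of_subset_of_nonneg (Finset.subset_univ A)
      (fun x _ _ => le_max_left _ _)
  have key2 : ∑ x ∈ Finset.univ.filter (fun x => ¬ Q x < P x), (Q x - γ * P x) ≤ δ := by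
    refine le_trans (le_trans (Finset.sum_le_sum fun x _ => le_max_right 0 _) ?_) h2
    exact Finset.sum_le_sum_of_subset_of_nonneg (Finset.subset_univ _)
      (fun x _ _ => le_max_left _ _)
  rw [hTV]
  rw [Finset.sum_sub_distrib] at *
  rw [← Finset.mul_sum] at key1 key2
  have hc : ∑ x ∈ Finset.univ.filter (fun x => ¬ Q x < P x), P x = 1 - ∑ x ∈ A, P x := by
    linarith
  have hd : ∑ x ∈ Finset.univ.filter (fun x => ¬ Q x < P x), Q x = 1 - ∑ x ∈ A, Q x := by
    linarith
  rw [hc, hd] at key2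
  rw [le_div_iff₀ (by linarith)]
  nlinarith [key1, key2]

/-- Per-pair parameter conversion. -/
lemma pair_bound {Y : Type*} [Fintype Y] {P Q : Y → ℝ} (hP : IsProb P) (hQ : IsProb Q)
    {γ β δ : ℝ} (hγ : 1 ≤ γ) (hβ : 1 ≤ β) (hδ0 : 0 ≤ δ)
    (h1 : hsDiv γ P Q ≤ δ) (h2 : hsDiv γ Q P ≤ δ) :
    hsDiv β P Q ≤ max ((γ + 2 * δ - 1 - (β - 1) * (1 - δ)) / (γ + 1)) δ := by
  rcases le_or_gt γ β with hc | hc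
  · exact le_trans (le_trans (hsDiv_anti hc hQ.1) h1) (le_max_right _ _)
  · have hγ1 : 1 < γ := lt_of_le_of_lt hβ hc
    set t : ℝ := (β - 1) / (γ - 1) with ht
    have ht0 : 0 ≤ t := div_nonneg (by linarith) (by linarith)
    have ht1 : t ≤ 1 := by
      rw [ht, div_le_one (by linarith)]; linarith
    have hmul : t * (γ - 1) = β - 1 := div_mul_cancel₀ _ (by linarith)
    have hβeq : β = (1 - t) * 1 + t * γ := by linear_combination (-1 : ℝ) * hmul
    have interp : hsDiv β P Q ≤ (1 - t) * hsDiv 1 P Q + t * hsDiv γ P Q := by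
      rw [hsDiv, hsDiv, hsDiv, Finset.mul_sum, Finset.mul_sum, ← Finset.sum_add_distrib]
      refine Finset.sum_le_sum fun x _ => ?_
      have hdecomp : P x - β * Q x = (1 - t) * (P x - 1 * Q x) + t * (P x - γ * Q x) := by
        rw [hβeq]; ring
      rw [hdecomp]
      refine max_le (add_nonneg (mul_nonneg (by linarith) (le_max_left _ _))
        (mul_nonneg ht0 (le_max_left _ _)))
        (add_le_add (mul_le_mul_of_nonneg_left (le_max_right _ _) (by linarith))
          (mul_le_mul_of_nonneg_left (le_max_right _ _) ht0))
    have htv := tv_bound hP hQ hγ h1 h2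
    refine le_trans interp (le_trans ?_ (le_max_left _ _))
    have step : (1 - t) * hsDiv 1 P Q + t * hsDiv γ P Q ≤
        (1 - t) * ((γ - 1 + 2 * δ) / (γ + 1)) + t * δ :=
      add_le_add (mul_le_mul_of_nonneg_left htv (by linarith))
        (mul_le_mul_of_nonneg_left h1 ht0)
    refine le_trans step (le_of_eq ?_)
    have hne1 : γ - 1 ≠ 0 := by linarith
    have hne2 : γ + 1 ≠ 0 := by linarith
    rw [ht]
    field_simp
    ring

/-- Joint convexity / mixture bound. -/
lemma mixture_bound {X Y : Type*} [Fintype X] [Fintype Y] (N : X → Y → ℝ)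
    {u v : X → ℝ} (hu : IsProb u) (hv : IsProb v) (β C : ℝ)
    (h : ∀ a b, hsDiv β (N a) (N b) ≤ C) :
    hsDiv β (push N u) (push N v) ≤ C := by
  have key : ∀ y, push N u y - β * push N v y
      = ∑ a, ∑ b, u a * v b * (N a y - β * N b y) := by
    intro y
    have inner : ∀ a, ∑ b, u a * v b * (N a y - β * N b y)
        = u a * N a y - u a * (β * push N v y) := by
      intro a
      have e : ∀ b, u a * v b * (N a y - β * N b y)
          = u a * N a y * v b - u a * β * (N b y * v b) := fun b => by ring
      simp_rw [e]
      rw [Finset.sum_sub_distrib, ← Finset.mul_sum, ← Finset.mul_sum, hv.2, push]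
      ring
    simp_rw [inner]
    rw [Finset.sum_sub_distrib, ← Finset.sum_mul, hu.2, push]
    rw [Finset.sum_congr rfl (fun a _ => mul_comm (u a) (N a y))]
    ring
  have step1 : hsDiv β (push N u) (push N v)
      ≤ ∑ y, ∑ a, ∑ b, u a * v b * max 0 (N a y - β * N b y) := by
    refine Finset.sum_le_sum fun y _ => ?_
    rw [key y]
    exact max_le
      (Finset.sum_nonneg fun a _ => Finset.sum_nonneg fun b _ =>
        mul_nonneg (mul_nonneg (hu.1 a) (hv.1 b)) (le_max_left _ _))
      (Finset.sum_le_sum fun a _ => Finset.sum_le_sum fun b _ =>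
        mul_le_mul_of_nonneg_left (le_max_right _ _) (mul_nonneg (hu.1 a) (hv.1 b)))
  have step2 : ∑ y, ∑ a, ∑ b, u a * v b * max 0 (N a y - β * N b y)
      = ∑ a, ∑ b, u a * v b * hsDiv β (N a) (N b) := by
    rw [Finset.sum_comm]
    refine Finset.sum_congr rfl fun a _ => ?_
    rw [Finset.sum_comm]
    refine Finset.sum_congr rfl fun b _ => ?_
    rw [← Finset.mul_sum, hsDiv]
  have step3 : ∑ a, ∑ b, u a * v b * hsDiv β (N a) (N b)
      ≤ ∑ a, ∑ b, u a * v b * C := by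
    refine Finset.sum_le_sum fun a _ => Finset.sum_le_sum fun b _ =>
      mul_le_mul_of_nonneg_left (h a b) (mul_nonneg (hu.1 a) (hv.1 b))
  have step4 : ∑ a, ∑ b, u a * v b * C = C := by
    simp_rw [mul_assoc, ← Finset.mul_sum]
    rw [← Finset.sum_mul, hu.2, one_mul, ← Finset.sum_mul, hv.2, one_mul]
  calc hsDiv β (push N u) (push N v) ≤ _ := step1
    _ = _ := step2
    _ ≤ _ := step3
    _ = C := step4

/-- Non-linear strong data-processing inequality for the hockey-stick divergence. -/
theorem stmt11 {X Y : Type*} [Fintype X] [Fintype Y] (N : X → Y → ℝ)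
    (hN : ∀ x, IsProb (N x)) (γ γ' δ : ℝ) (hγ : 1 ≤ γ) (hγ' : 1 ≤ γ')
    (hδ0 : 0 ≤ δ) (hδ1 : δ ≤ 1)
    (hLDP : ∀ a b : X, hsDiv γ (N a) (N b) ≤ δ)
    (p q : X → ℝ) (hp : IsProb p) (hq : IsProb q) :
    hsDiv γ' (push N p) (push N q) ≤
      max (((γ + 2 * δ - 1) * hsDiv γ' p q - (γ' - 1) * (1 - δ)) / (γ + 1))
        (δ * hsDiv γ' p q) := by
  classical
  set ε := hsDiv γ' p q with hε
  set f : X → ℝ := fun x => max 0 (p x - γ' * q x) with hf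
  set g : X → ℝ := fun x => max 0 (γ' * q x - p x) with hg
  have hf0 : ∀ x, 0 ≤ f x := fun x => le_max_left _ _
  have hg0 : ∀ x, 0 ≤ g x := fun x => le_max_left _ _
  have hfg : ∀ x, f x - g x = p x - γ' * q x := by
    intro x
    rcases le_total (p x - γ' * q x) 0 with h | h
    · rw [hf, hg]
      simp only []
      rw [max_eq_left h, max_eq_right (by linarith)]
      ring
    · rw [hf, hg]
      simp only []
      rw [max_eq_right h, max_eq_left (by linarith)]
      ring
  have hsf : ∑ x, f x = ε := by rw [hε, hsDiv]
  have hsg : ∑ x, g x = ε + γ' - 1 := by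
    have h1 : ∑ x, (f x - g x) = 1 - γ' := by
      rw [Finset.sum_congr rfl (fun x _ => hfg x), Finset.sum_sub_distrib,
        ← Finset.mul_sum, hp.2, hq.2]
      ring
    rw [Finset.sum_sub_distrib, hsf] at h1
    linarith
  have hε0 : 0 ≤ ε := hε ▸ Finset.sum_nonneg fun x _ => le_max_left _ _
  rcases hε0.eq_or_lt with hez | hεpos
  · -- ε = 0 : p ≤ γ' q pointwise, LHS = 0
    have hfz : ∀ x, f x = 0 := by
      intro x
      have := (Finset.sum_eq_zero_iff_of_nonneg (fun x _ => hf0 x)).mp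
        (by rw [hsf]; exact hez.symm) x (Finset.mem_univ x)
      exact this
    have hfx : ∀ x, p x ≤ γ' * q x := by
      intro x
      have h1 := hfz x
      rw [hf] at h1
      simp only [] at h1
      by_contra hcon
      push_neg at hcon
      rw [max_eq_right (by linarith)] at h1
      linarith
    have hLHS : hsDiv γ' (push N p) (push N q) = 0 := by
      rw [hsDiv]
      refine Finset.sum_eq_zero fun y _ => ?_
      have hle : push N p y ≤ γ' * push N q y := by
        rw [push, push, Finset.mul_sum]
        refine Finset.sum_le_sum fun x _ => ?_
        calc N x y * p x ≤ N x y * (γ' * q x) :=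
              mul_le_mul_of_nonneg_left (hfx x) ((hN x).1 y)
          _ = γ' * (N x y * q x) := by ring
      rw [max_eq_left (by linarith)]
    rw [hLHS]
    refine le_trans (le_of_eq ?_) (le_max_right _ _)
    rw [← hez, mul_zero]
  · -- ε > 0
    have hSg : 0 < ε + γ' - 1 := by linarith
    set β : ℝ := (ε + γ' - 1) / ε with hβ
    have hβ1 : 1 ≤ β := by
      rw [hβ, le_div_iff₀ hεpos, one_mul]; linarith
    set u : X → ℝ := fun x => f x / ε with hu'
    set v : X → ℝ := fun x => g x / (ε + γ' - 1) with hv'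
    have hu : IsProb u := by
      constructor
      · intro x; exact div_nonneg (hf0 x) hε0
      · rw [hu']
        simp only []
        rw [← Finset.sum_div, hsf, div_self (ne_of_gt hεpos)]
    have hv : IsProb v := by
      constructor
      · intro x; exact div_nonneg (hg0 x) (le_of_lt hSg)
      · rw [hv']
        simp only []
        rw [← Finset.sum_div, hsg, div_self (ne_of_gt hSg)]
    have hεβ : ε * β = ε + γ' - 1 := by
      rw [hβ, mul_div_cancel₀ _ (ne_of_gt hεpos)]
    have hkey : ∀ y, push N p y - γ' * push N q y
        = ε * (push N u y - β * push N v y) := by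
      intro y
      have e1 : ε * push N u y = push N f y := by
        rw [push, push, Finset.mul_sum]
        refine Finset.sum_congr rfl fun x _ => ?_
        rw [hu']
        simp only []
        rw [mul_comm ε _, mul_assoc, div_mul_cancel₀ _ (ne_of_gt hεpos)]
      have e2 : (ε + γ' - 1) * push N v y = push N g y := by
        rw [push, push, Finset.mul_sum]
        refine Finset.sum_congr rfl fun x _ => ?_
        rw [hv']
        simp only []
        rw [mul_comm (ε + γ' - 1) _, mul_assoc, div_mul_cancel₀ _ (ne_of_gt hSg)]
      have e4 : push N p y - γ' * push N q y = push N f y - push N g y := by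
        rw [push, push, push, push, Finset.mul_sum, ← Finset.sum_sub_distrib,
          ← Finset.sum_sub_distrib]
        refine Finset.sum_congr rfl fun x _ => ?_
        linear_combination (-(N x y)) * hfg x
      rw [e4, mul_sub, e1, ← mul_assoc, hεβ, e2]
    have hmain : hsDiv γ' (push N p) (push N q)
        = ε * hsDiv β (push N u) (push N v) := by
      rw [hsDiv, hsDiv, Finset.mul_sum]
      refine Finset.sum_congr rfl fun y _ => ?_
      rw [hkey y, mul_max_of_nonneg _ _ hε0, mul_zero]
    have hC : ∀ a b, hsDiv β (N a) (N b)
        ≤ max ((γ + 2 * δ - 1 - (β - 1) * (1 - δ)) / (γ + 1)) δ :=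
      fun a b => pair_bound (hN a) (hN b) hγ hβ1 hδ0 (hLDP a b) (hLDP b a)
    have hmix := mixture_bound N hu hv β _ hC
    rw [hmain]
    refine le_trans (mul_le_mul_of_nonneg_left hmix hε0) ?_
    rw [mul_max_of_nonneg _ _ hε0]
    refine max_le_max (le_of_eq ?_) (le_of_eq (mul_comm _ _))
    have hne2 : γ + 1 ≠ 0 := by linarith
    rw [hβ]
    field_simp
    ring
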